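/- arXiv:2510.15076 — 3 statements merged into one kernel-verified Lean document; each statement's English description precedes it below -/
import Mathlib

section
/- Let $G=(V,E)$ be a complete signed graph and $U \subseteq V$ a subset. Define the correlation metric on $U$ by $d^U_{uv} := 1 - |N_u^+ \cap N_v^+ \cap U|/|(N_u^+ \cup N_v^+) \cap U|$, where $d^U_{uv} := 1$ if $(N_u^+ \cup N_v^+) \cap U = \emptyset$ and $u \neq v$, and $d^U_{uu} := 0$. Then $d^U$ satisfies the triangle inequality $d^U_{uv} \leq d^U_{uw} + d^U_{wv}$ for all $u,v,w \in V$. -/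
open Finset

set_option maxHeartbeats 1000000 in
lemma jac_core (a b c x y z t : ℝ) (ha : 0 ≤ a) (hb : 0 ≤ b) (hc : 0 ≤ c)
    (hx : 0 ≤ x) (hy : 0 ≤ y) (hz : 0 ≤ z) (ht : 0 ≤ t)
    (h1 : 0 < a+b+x+y+z+t) (h2 : 0 < a+c+x+y+z+t) (h3 : 0 < b+c+x+y+z+t) :
    1 - (x+t)/(a+b+x+y+z+t) ≤ (1 - (y+t)/(a+c+x+y+z+t)) + (1 - (z+t)/(b+c+x+y+z+t)) := by
  have hP : (0:ℝ) ≤ 2*x*t*t + 4*x*z*t + 2*x*z*z + 4*x*y*t + 4*x*y*z + 2*x*y*y + 4*x*x*t + 4*x*x*z + 4*x*x*y + 2*x*x*x + 2*c*t*t + 3*c*z*t + 1*c*z*z + 3*c*y*t + 2*c*y*z + 1*c*y*y + 6*c*x*t + 5*c*x*z + 5*c*x*y + 4*c*x*x + 2*c*c*t + 1*c*c*z + 1*c*c*y + 2*c*c*x + 1*b*z*t + 1*b*z*z + 1*b*y*z + 3*b*x*t + 4*b*x*z + 3*b*x*y + 3*b*x*x + 2*b*c*t + 2*b*c*z + 2*b*c*y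 + 4*b*c*x + 1*b*c*c + 1*b*b*z + 1*b*b*x + 1*b*b*c + 1*a*y*t + 1*a*y*z + 1*a*y*y + 3*a*x*t + 3*a*x*z + 4*a*x*y + 3*a*x*x + 2*a*c*t + 2*a*c*z + 2*a*c*y + 4*a*c*x + 1*a*c*c + 2*a*b*t + 2*a*b*z + 2*a*b*y + 4*a*b*x + 2*a*b*c + 1*a*b*b + 1*a*a*y + 1*a*a*x + 1*a*a*c + 1*a*a*b := by positivity
  have key : (y+t)*((b+c+x+y+z+t)*(a+b+x+y+z+t)) + (z+t)*((a+c+x+y+z+t)*(a+b+x+y+z+t)) ≤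
      (a+c+x+y+z+t)*((b+c+x+y+z+t)*(a+b+x+y+z+t)) + (x+t)*((a+c+x+y+z+t)*(b+c+x+y+z+t)) := by
    have e : (a+c+x+y+z+t)*((b+c+x+y+z+t)*(a+b+x+y+z+t)) + (x+t)*((a+c+x+y+z+t)*(b+c+x+y+z+t))
        - ((y+t)*((b+c+x+y+z+t)*(a+b+x+y+z+t)) + (z+t)*((a+c+x+y+z+t)*(a+b+x+y+z+t)))
        = 2*x*t*t + 4*x*z*t + 2*x*z*z + 4*x*y*t + 4*x*y*z + 2*x*y*y + 4*x*x*t + 4*x*x*z + 4*x*x*y + 2*x*x*x + 2*c*t*t + 3*c*z*t + 1*c*z*z + 3*c*y*t + 2*c*y*z + 1*c*y*y + 6*c*x*t + 5*c*x*z + 5*c*x*y + 4*c*x*x + 2*c*c*t + 1*c*c*z + 1*c*c*y + 2*c*c*x + 1*b*z*t + 1*b*z*z + 1*b*y*z + 3*b*x*t + 4*b*x*z + 3*b*x*y + 3*b*x*x + 2*b*c*t + 2*b*c*z + 2*b*c*y + 4*b*c*x + 1*b*c*c + 1*b*b*z + 1*b*b*x + 1*b*b*c + 1*a*y*t + 1*a*y*z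 + 1*a*y*y + 3*a*x*t + 3*a*x*z + 4*a*x*y + 3*a*x*x + 2*a*c*t + 2*a*c*z + 2*a*c*y + 4*a*c*x + 1*a*c*c + 2*a*b*t + 2*a*b*z + 2*a*b*y + 4*a*b*x + 2*a*b*c + 1*a*b*b + 1*a*a*y + 1*a*a*x + 1*a*a*c + 1*a*a*b := by ring
    linarith [e, hP]
  have d1 : (y+t)/(a+c+x+y+z+t) + (z+t)/(b+c+x+y+z+t) ≤ 1 + (x+t)/(a+b+x+y+z+t) := by
    rw [div_add_div _ _ (ne_of_gt h2) (ne_of_gt h3), div_le_iff₀ (mul_pos h2 h3)]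
    have e2 : (1:ℝ) + (x+t)/(a+b+x+y+z+t) = ((a+b+x+y+z+t) + (x+t))/(a+b+x+y+z+t) := by
      field_simp
    rw [e2, div_mul_eq_mul_div, le_div_iff₀ h1]
    ring_nf at key ⊢
    linarith [key]
  linarith [d1]

lemma jac_finset {V : Type*} [DecidableEq V] (A B C : Finset V)
    (hAB : (A ∪ B).Nonempty) (hAC : (A ∪ C).Nonempty) (hCB : (C ∪ B).Nonempty) :
    1 - ((A ∩ B).card : ℝ) / ((A ∪ B).card : ℝ) ≤
      (1 - ((A ∩ C).card : ℝ) / ((A ∪ C).card : ℝ)) +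
      (1 - ((C ∩ B).card : ℝ) / ((C ∪ B).card : ℝ)) := by
  set t := (A ∩ B ∩ C).card with htd
  set x := ((A ∩ B) \ C).card with hxd
  set y := ((A ∩ C) \ B).card with hyd
  set z := ((B ∩ C) \ A).card with hzd
  set a := (A \ (B ∪ C)).card with had
  set b := (B \ (A ∪ C)).card with hbd
  set c := (C \ (A ∪ B)).card with hcd
  have hiAB : (A ∩ B).card = x + t := by
    have := card_inter_add_card_sdiff (A ∩ B) C
    omega
  have hiAC : (A ∩ C).card = y + t := by
    have h := card_inter_add_card_sdiff (A ∩ C) B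
    rw [inter_right_comm] at h
    omega
  have hiBC : (B ∩ C).card = z + t := by
    have h := card_inter_add_card_sdiff (B ∩ C) A
    have e : B ∩ C ∩ A = A ∩ B ∩ C := by rw [inter_comm, ← inter_assoc]
    rw [e] at h
    omega
  have hiCB : (C ∩ B).card = z + t := by rw [inter_comm]; exact hiBC
  have hA : A.card = a + x + y + t := by
    have h1 := card_inter_add_card_sdiff A (B ∪ C)
    have h2 := card_union_add_card_inter (A ∩ B) (A ∩ C)
    have e1 : A ∩ (B ∪ C) = (A ∩ B) ∪ (A ∩ C) := inter_union_distrib_left A B C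
    have e2 : (A ∩ B) ∩ (A ∩ C) = A ∩ B ∩ C := by
      ext p; simp only [mem_inter]; tauto
    rw [e1] at h1; rw [e2] at h2
    omega
  have hB : B.card = b + x + z + t := by
    have h1 := card_inter_add_card_sdiff B (A ∪ C)
    have h2 := card_union_add_card_inter (A ∩ B) (B ∩ C)
    have e1 : B ∩ (A ∪ C) = (A ∩ B) ∪ (B ∩ C) := by
      ext p; simp only [mem_inter, mem_union]; tauto
    have e2 : (A ∩ B) ∩ (B ∩ C) = A ∩ B ∩ C := by
      ext p; simp only [mem_inter]; tauto
    rw [e1] at h1; rw [e2] at h2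
    omega
  have hC : C.card = c + y + z + t := by
    have h1 := card_inter_add_card_sdiff C (A ∪ B)
    have h2 := card_union_add_card_inter (A ∩ C) (B ∩ C)
    have e1 : C ∩ (A ∪ B) = (A ∩ C) ∪ (B ∩ C) := by
      ext p; simp only [mem_inter, mem_union]; tauto
    have e2 : (A ∩ C) ∩ (B ∩ C) = A ∩ B ∩ C := by
      ext p; simp only [mem_inter]; tauto
    rw [e1] at h1; rw [e2] at h2
    omega
  have huAB : (A ∪ B).card = a + b + x + y + z + t := by
    have h := card_union_add_card_inter A B
    omega
  have huAC : (A ∪ C).card = a + c + x + y + z + t := by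
    have h := card_union_add_card_inter A C
    omega
  have huCB : (C ∪ B).card = b + c + x + y + z + t := by
    have h := card_union_add_card_inter C B
    rw [inter_comm] at h
    omega
  rw [hiAB, hiAC, hiCB, huAB, huAC, huCB]
  have p1 : 0 < a + b + x + y + z + t := by
    have := card_pos.mpr hAB; omega
  have p2 : 0 < a + c + x + y + z + t := by
    have := card_pos.mpr hAC; omega
  have p3 : 0 < b + c + x + y + z + t := by
    have := card_pos.mpr hCB; omega
  have := jac_core (a:ℝ) b c x y z t (by positivity) (by positivity) (by positivity)
    (by positivity) (by positivity) (by positivity) (by positivity)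
    (by exact_mod_cast p1) (by exact_mod_cast p2) (by exact_mod_cast p3)
  push_cast
  push_cast at this
  convert this using 3 <;> ring

/-- The correlation metric on a subset `U` of the vertex set of a complete
signed graph with positive neighborhoods `N`:
`d^U u v = 1 - |N u ∩ N v ∩ U| / |(N u ∪ N v) ∩ U|`, where the value is `1`
if `(N u ∪ N v) ∩ U = ∅` and `u ≠ v`, and `0` on the diagonal. -/
noncomputable def corrDistOn {V : Type*} [DecidableEq V]
    (N : V → Finset V) (U : Finset V) (u v : V) : ℝ :=
  if u = v then 0
  else if ((N u ∪ N v) ∩ U) = ∅ then 1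
  else 1 - ((N u ∩ N v ∩ U).card : ℝ) / (((N u ∪ N v) ∩ U).card : ℝ)

lemma corrDistOn_nonneg {V : Type*} [DecidableEq V]
    (N : V → Finset V) (U : Finset V) (u v : V) : 0 ≤ corrDistOn N U u v := by
  unfold corrDistOn
  split_ifs with h1 h2
  · norm_num
  · norm_num
  · have hsub : N u ∩ N v ∩ U ⊆ (N u ∪ N v) ∩ U :=
      inter_subset_inter (inter_subset_left.trans subset_union_left) subset_rfl
    have hpos : 0 < (((N u ∪ N v) ∩ U).card : ℝ) := by
      exact_mod_cast card_pos.mpr (nonempty_iff_ne_empty.mpr h2)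
    have hle : ((N u ∩ N v ∩ U).card : ℝ) / (((N u ∪ N v) ∩ U).card : ℝ) ≤ 1 := by
      rw [div_le_one hpos]
      exact_mod_cast card_le_card hsub
    linarith

lemma corrDistOn_le_one {V : Type*} [DecidableEq V]
    (N : V → Finset V) (U : Finset V) (u v : V) : corrDistOn N U u v ≤ 1 := by
  unfold corrDistOn
  split_ifs with h1 h2
  · norm_num
  · norm_num
  · have : (0:ℝ) ≤ ((N u ∩ N v ∩ U).card : ℝ) / (((N u ∪ N v) ∩ U).card : ℝ) :=
      div_nonneg (Nat.cast_nonneg _) (Nat.cast_nonneg _)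
    linarith

lemma corrDistOn_eq_one_left {V : Type*} [DecidableEq V]
    (N : V → Finset V) (U : Finset V) (u v : V)
    (h : N u ∩ U = ∅) (hne : u ≠ v) : corrDistOn N U u v = 1 := by
  unfold corrDistOn
  rw [if_neg hne]
  split_ifs with h2
  · rfl
  · have he : N u ∩ N v ∩ U = ∅ := by
      apply subset_empty.mp
      rw [← h]
      exact inter_subset_inter (inter_subset_left) subset_rfl
    rw [he]
    simp

lemma corrDistOn_eq_one_right {V : Type*} [DecidableEq V]
    (N : V → Finset V) (U : Finset V) (u v : V)
    (h : N v ∩ U = ∅) (hne : u ≠ v) : corrDistOn N U u v = 1 := by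
  unfold corrDistOn
  rw [if_neg hne]
  split_ifs with h2
  · rfl
  · have he : N u ∩ N v ∩ U = ∅ := by
      apply subset_empty.mp
      rw [← h]
      exact inter_subset_inter (inter_subset_right) subset_rfl
    rw [he]
    simp

lemma corrDistOn_self {V : Type*} [DecidableEq V]
    (N : V → Finset V) (U : Finset V) (u : V) : corrDistOn N U u u = 0 := if_pos rfl

/-- The correlation metric on `U` satisfies the triangle inequality. -/
theorem stmt_1 {V : Type*} [Fintype V] [DecidableEq V]
    (N : V → Finset V)
    (hself : ∀ u, u ∈ N u)
    (hsym : ∀ u v, u ∈ N v ↔ v ∈ N u)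
    (U : Finset V)
    (u v w : V) :
    corrDistOn N U u v ≤ corrDistOn N U u w + corrDistOn N U w v := by
  by_cases huv : u = v
  · subst huv
    rw [corrDistOn_self]
    exact add_nonneg (corrDistOn_nonneg N U u w) (corrDistOn_nonneg N U w u)
  by_cases hwu : w = u
  · subst hwu
    rw [corrDistOn_self]
    linarith [le_refl (corrDistOn N U w v)]
  by_cases hwv : w = v
  · subst hwv
    rw [corrDistOn_self]
    linarith [le_refl (corrDistOn N U u w)]
  have huw : u ≠ w := fun h => hwu h.symm
  by_cases h1 : N u ∩ U = ∅
  · have e := corrDistOn_eq_one_left N U u w h1 huw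
    have l1 := corrDistOn_le_one N U u v
    have l2 := corrDistOn_nonneg N U w v
    linarith
  by_cases h3 : N v ∩ U = ∅
  · have e := corrDistOn_eq_one_right N U w v h3 hwv
    have l1 := corrDistOn_le_one N U u v
    have l2 := corrDistOn_nonneg N U u w
    linarith
  -- all relevant unions nonempty
  have hAne : (N u ∩ U).Nonempty := nonempty_iff_ne_empty.mpr h1
  have hBne : (N v ∩ U).Nonempty := nonempty_iff_ne_empty.mpr h3
  have eUAB : (N u ∪ N v) ∩ U = (N u ∩ U) ∪ (N v ∩ U) := union_inter_distrib_right _ _ _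
  have eUAC : (N u ∪ N w) ∩ U = (N u ∩ U) ∪ (N w ∩ U) := union_inter_distrib_right _ _ _
  have eUCB : (N w ∪ N v) ∩ U = (N w ∩ U) ∪ (N v ∩ U) := union_inter_distrib_right _ _ _
  have eIAB : N u ∩ N v ∩ U = (N u ∩ U) ∩ (N v ∩ U) := by
    ext p; simp only [mem_inter]; tauto
  have eIAC : N u ∩ N w ∩ U = (N u ∩ U) ∩ (N w ∩ U) := by
    ext p; simp only [mem_inter]; tauto
  have eICB : N w ∩ N v ∩ U = (N w ∩ U) ∩ (N v ∩ U) := by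
    ext p; simp only [mem_inter]; tauto
  have nAB : (N u ∪ N v) ∩ U ≠ ∅ := by
    rw [eUAB]
    exact nonempty_iff_ne_empty.mp (hAne.mono subset_union_left)
  have nAC : (N u ∪ N w) ∩ U ≠ ∅ := by
    rw [eUAC]
    exact nonempty_iff_ne_empty.mp (hAne.mono subset_union_left)
  have nCB : (N w ∪ N v) ∩ U ≠ ∅ := by
    rw [eUCB]
    exact nonempty_iff_ne_empty.mp (hBne.mono subset_union_right)
  unfold corrDistOn
  rw [if_neg huv, if_neg huw, if_neg hwv, if_neg nAB, if_neg nAC, if_neg nCB,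
    eUAB, eUAC, eUCB, eIAB, eIAC, eICB]
  exact jac_finset (N u ∩ U) (N v ∩ U) (N w ∩ U)
    (nonempty_iff_ne_empty.mpr (by rw [← eUAB]; exact nAB))
    (nonempty_iff_ne_empty.mpr (by rw [← eUAC]; exact nAC))
    (nonempty_iff_ne_empty.mpr (by rw [← eUCB]; exact nCB))
end

section
/- Let $f: V \times V \to [0,1]$ be a symmetric function with $f_{uu}=0$ satisfying the triangle inequality, taking values in $[0,1]$. Define $g$ from $f$ by: for certain pairs $uv$ with $f_{uv} > 7/10$ set $g_{uv}=1$; additionally for each vertex $u$ in a designated set $R$, set $g_{uv}=1$ for all $v \neq u$; otherwise $g_{uv}=f_{uv}$. Then $g$ is a $(10/7)$-semi-metric: $g_{uv} \leq (10/7)(g_{uw}+g_{wv})$ for all $u,v,w$. -/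
/-- If `f` is a `[0,1]`-valued semi-metric and `g` is obtained from `f` by
rounding up to `1` certain pairs whose `f`-value exceeds `7/10`, and isolating
(all pairs set to `1`) the vertices of a designated set `R`, keeping
`g u v = f u v` otherwise, then `g` is a `(10/7)`-semi-metric. -/
theorem stmt_2 {V : Type*} (f g : V → V → ℝ) (R : Set V)
    (hfsymm : ∀ u v, f u v = f v u)
    (hfdiag : ∀ u, f u u = 0)
    (hf0 : ∀ u v, 0 ≤ f u v)
    (hf1 : ∀ u v, f u v ≤ 1)
    (hftri : ∀ u v w, f u v ≤ f u w + f w v)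
    (hgsymm : ∀ u v, g u v = g v u)
    (hgdiag : ∀ u, g u u = 0)
    (hgR : ∀ u v, u ≠ v → (u ∈ R ∨ v ∈ R) → g u v = 1)
    (hgcases : ∀ u v, u ≠ v → g u v = f u v ∨ (g u v = 1 ∧ 7/10 < f u v))
    (u v w : V) :
    g u v ≤ (10/7) * (g u w + g w v) := by
  have hg0 : ∀ a b, 0 ≤ g a b := by
    intro a b
    rcases eq_or_ne a b with rfl | h
    · simp [hgdiag]
    · rcases hgcases a b h with h' | ⟨h', _⟩ <;> rw [h']
      · exact hf0 a b
      · norm_num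
  have hg1 : ∀ a b, g a b ≤ 1 := by
    intro a b
    rcases eq_or_ne a b with rfl | h
    · simp [hgdiag]
    · rcases hgcases a b h with h' | ⟨h', _⟩
      · rw [h']; exact hf1 a b
      · rw [h']
  rcases eq_or_ne u v with rfl | huv
  · rw [hgdiag]
    have := hg0 u w; have := hg0 w u
    linarith
  rcases eq_or_ne w u with rfl | hwu
  · rw [hgdiag]
    have := hg0 w v
    linarith
  rcases eq_or_ne w v with rfl | hwv
  · rw [hgdiag]
    have := hg0 u w
    linarith
  rcases hgcases u w (Ne.symm hwu) with h1 | ⟨h1, _⟩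
  · rcases hgcases w v hwv with h2 | ⟨h2, _⟩
    · rcases hgcases u v huv with h3 | ⟨h3, hf⟩
      · rw [h1, h2, h3]
        have := hftri u v w
        have := hf0 u w; have := hf0 w v
        linarith
      · rw [h1, h2, h3]
        have := hftri u v w
        linarith
    · have := hg1 u v; have := hg0 u w
      rw [h2]; linarith
  · have := hg1 u v; have := hg0 w v
    rw [h1]; linarith
end

section
/- Let $H = (V_1, V_2, F)$ be a bipartite graph, let $w: V_2 \to \mathbb{R}_{\geq 0}$ be a weight function and $K \geq 1$ a constant, and suppose that for every edge $uv \in F$ (with $u \in V_1$, $v \in V_2$) we have $\deg_H(u) + \deg_H(v) \leq 3K \cdot w(v)$. Then for every $p \geq 1$, $\sum_{u \in V_1} \deg_H(u)^p \leq (3K)^{p-1} \sum_{v \in V_2} \deg_H(v) \cdot w(v)^{p-1}$. -/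
open Finset

/-- Double counting in a bipartite graph `H = (V₁, V₂, F)`: if
`deg_H(u) + deg_H(v) ≤ 3K·w(v)` for every edge `uv ∈ F`, then for every
`p ≥ 1`, `∑_{u ∈ V₁} deg_H(u)^p ≤ (3K)^{p-1} ∑_{v ∈ V₂} deg_H(v)·w(v)^{p-1}`. -/
theorem stmt_15 {V₁ V₂ : Type*} [Fintype V₁] [Fintype V₂]
    (F : V₁ → V₂ → Prop) [∀ u v, Decidable (F u v)]
    (w : V₂ → ℝ) (hw : ∀ v, 0 ≤ w v)
    (K : ℝ) (hK : 1 ≤ K)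
    (deg₁ : V₁ → ℕ) (deg₂ : V₂ → ℕ)
    (hdeg₁ : ∀ u, deg₁ u = (univ.filter (fun v => F u v)).card)
    (hdeg₂ : ∀ v, deg₂ v = (univ.filter (fun u => F u v)).card)
    (hedge : ∀ u v, F u v → (deg₁ u : ℝ) + (deg₂ v : ℝ) ≤ 3 * K * w v)
    (p : ℝ) (hp : 1 ≤ p) :
    ∑ u, (deg₁ u : ℝ) ^ p ≤
      (3 * K) ^ (p - 1) * ∑ v, (deg₂ v : ℝ) * (w v) ^ (p - 1) := by
  have hp0 : (0:ℝ) ≤ p - 1 := by linarith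
  have key : ∀ u : V₁, (deg₁ u : ℝ) ^ p ≤
      ∑ v ∈ univ.filter (fun v => F u v), (3 * K * w v) ^ (p - 1) := by
    intro u
    have hcard : (deg₁ u : ℝ) = (univ.filter (fun v => F u v)).card := by
      rw [hdeg₁ u]
    calc (deg₁ u : ℝ) ^ p
        = ∑ v ∈ univ.filter (fun v => F u v), (deg₁ u : ℝ) ^ (p - 1) := by
          rw [Finset.sum_const, nsmul_eq_mul, ← hcard]
          rcases Nat.eq_zero_or_pos (deg₁ u) with h | h
          · rw [h]
            simp only [Nat.cast_zero, mul_zero]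
            rw [Real.zero_rpow (by linarith : p ≠ 0), zero_mul]
          · have hpos : (0:ℝ) < deg₁ u := by exact_mod_cast h
            nth_rewrite 2 [← Real.rpow_one ((deg₁ u : ℝ))]
            rw [← Real.rpow_add hpos]
            norm_num
      _ ≤ ∑ v ∈ univ.filter (fun v => F u v), (3 * K * w v) ^ (p - 1) := by
          apply Finset.sum_le_sum
          intro v hv
          simp only [mem_filter] at hv
          exact Real.rpow_le_rpow (Nat.cast_nonneg _)
            (le_trans (le_add_of_nonneg_right (Nat.cast_nonneg _)) (hedge u v hv.2)) hp0
  calc ∑ u, (deg₁ u : ℝ) ^ p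
      ≤ ∑ u, ∑ v ∈ univ.filter (fun v => F u v), (3 * K * w v) ^ (p - 1) :=
        Finset.sum_le_sum fun u _ => key u
    _ = ∑ u, ∑ v, if F u v then (3 * K * w v) ^ (p - 1) else 0 := by
        simp [Finset.sum_filter]
    _ = ∑ v, ∑ u, if F u v then (3 * K * w v) ^ (p - 1) else 0 :=
        Finset.sum_comm
    _ = ∑ v, (deg₂ v : ℝ) * (3 * K * w v) ^ (p - 1) := by
        refine Finset.sum_congr rfl fun v _ => ?_
        rw [← Finset.sum_filter, Finset.sum_const, nsmul_eq_mul, hdeg₂ v]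
    _ = (3 * K) ^ (p - 1) * ∑ v, (deg₂ v : ℝ) * (w v) ^ (p - 1) := by
        rw [Finset.mul_sum]
        refine Finset.sum_congr rfl fun v _ => ?_
        rw [Real.mul_rpow (by positivity) (hw v)]
        ring
end
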